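/- arXiv:2312.11745 — 3 statements merged into one kernel-verified Lean document; each statement's English description precedes it below -/
import Mathlib

section
/- Every optimal solution of the augmented reference point scalarization is Pareto optimal: let X be nonempty, f : X → (ι → ℝ), ι finite nonempty, weights ω j > 0, goals g j, and ε > 0. If x* minimises s(x) = max_j ω j (f j x − g j) + ε · Σ_j ω j (f j x − g j) over X, then x* is Pareto optimal: no x ∈ X satisfies f j x ≤ f j x* for all j with strict inequality for some j. -/
open Finset

/-- a minimiser of the augmented reference point scalarization is
Pareto optimal. -/
theorem augmented_chebyshev_min_pareto
    (X : Type*) [Nonempty X] (ι : Type*) [Fintype ι] [Nonempty ι]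
    (f : X → ι → ℝ) (ω g : ι → ℝ) (ε : ℝ)
    (hω : ∀ j, 0 < ω j) (hε : 0 < ε) (xstar : X)
    (hmin : ∀ x : X,
      Finset.univ.sup' Finset.univ_nonempty (fun j => ω j * (f xstar j - g j)) +
        ε * ∑ j, ω j * (f xstar j - g j) ≤
      Finset.univ.sup' Finset.univ_nonempty (fun j => ω j * (f x j - g j)) +
        ε * ∑ j, ω j * (f x j - g j)) :
    ¬ ∃ x : X, (∀ j, f x j ≤ f xstar j) ∧ ∃ j, f x j < f xstar j := by
  rintro ⟨x, hle, j0, hlt⟩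
  have hsup : Finset.univ.sup' Finset.univ_nonempty (fun j => ω j * (f x j - g j)) ≤
      Finset.univ.sup' Finset.univ_nonempty (fun j => ω j * (f xstar j - g j)) := by
    apply Finset.sup'_le
    intro j _
    refine le_trans ?_ (Finset.le_sup' (fun j => ω j * (f xstar j - g j)) (Finset.mem_univ j))
    have := hω j
    nlinarith [hle j]
  have hsum : ∑ j, ω j * (f x j - g j) < ∑ j, ω j * (f xstar j - g j) := by
    apply Finset.sum_lt_sum (fun j _ => by nlinarith [hle j, (hω j).le])
    exact ⟨j0, Finset.mem_univ j0, by nlinarith [hω j0]⟩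
  have := hmin x
  nlinarith
end

section
/- In the multi-scenario augmented reference point goal program, any optimal solution is scenario-Pareto optimal: with f : X → Fin m → Fin s → ℝ, weights ω i p > 0, goals g i p, ε > 0, if x* minimises max_{i,p} ω i p (f i p x − g i p) + ε Σ_{i,p} ω i p (f i p x − g i p) over nonempty X, then no x ∈ X satisfies f i p x ≤ f i p x* for all (i,p) with strict inequality for some (j,q). -/
open Finset

/-- a minimiser of the multi-scenario augmented reference point
goal program is scenario-Pareto optimal. -/
theorem multiScenario_augmented_gp_pareto
    (X : Type*) [Nonempty X] (m s : ℕ) (hm : 1 ≤ m) (hs : 1 ≤ s)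
    (f : X → Fin m → Fin s → ℝ) (ω g : Fin m → Fin s → ℝ) (ε : ℝ)
    (hω : ∀ i p, 0 < ω i p) (hε : 0 < ε)
    (hne : (Finset.univ : Finset (Fin m × Fin s)).Nonempty) (xstar : X)
    (hmin : ∀ x : X,
      Finset.univ.sup' hne (fun ip : Fin m × Fin s =>
          ω ip.1 ip.2 * (f xstar ip.1 ip.2 - g ip.1 ip.2)) +
        ε * ∑ i, ∑ p, ω i p * (f xstar i p - g i p) ≤
      Finset.univ.sup' hne (fun ip : Fin m × Fin s =>
          ω ip.1 ip.2 * (f x ip.1 ip.2 - g ip.1 ip.2)) +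
        ε * ∑ i, ∑ p, ω i p * (f x i p - g i p)) :
    ¬ ∃ x : X, (∀ i p, f x i p ≤ f xstar i p) ∧ ∃ j q, f x j q < f xstar j q := by
  rintro ⟨x, hdom, j, q, hjq⟩
  have hsup : Finset.univ.sup' hne (fun ip : Fin m × Fin s =>
      ω ip.1 ip.2 * (f x ip.1 ip.2 - g ip.1 ip.2)) ≤
      Finset.univ.sup' hne (fun ip : Fin m × Fin s =>
      ω ip.1 ip.2 * (f xstar ip.1 ip.2 - g ip.1 ip.2)) := by
    apply Finset.sup'_mono_fun
    intro ip _
    exact mul_le_mul_of_nonneg_left (by linarith [hdom ip.1 ip.2]) (hω ip.1 ip.2).le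
  have hsum : ∑ i, ∑ p, ω i p * (f x i p - g i p) <
      ∑ i, ∑ p, ω i p * (f xstar i p - g i p) := by
    apply Finset.sum_lt_sum
    · intro i _
      apply Finset.sum_le_sum
      intro p _
      exact mul_le_mul_of_nonneg_left (by linarith [hdom i p]) (hω i p).le
    · refine ⟨j, Finset.mem_univ j, ?_⟩
      apply Finset.sum_lt_sum
      · intro p _
        exact mul_le_mul_of_nonneg_left (by linarith [hdom j p]) (hω j p).le
      · exact ⟨q, Finset.mem_univ q,
          mul_lt_mul_of_pos_left (by linarith) (hω j q)⟩
  have := hmin x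
  nlinarith
end

section
/- A solution of the moving horizon model obtained by sequentially optimising (first optimising the first two-stage model, then the second) can be dominated by a solution of the three-stage model: there exists a linear three-stage instance (e.g., with real scalar variables, constraints x⁰ ≤ 1, x⁰ − x¹ ≤ 1, x⁰ + x¹ + x² ≤ 1/2, nonnegativity, and first two-stage objective maximising x⁰) in which every optimal first-stage solution of the first two-stage model admits no feasible completion in the three-stage model, while the three-stage model itself is feasible. -/
/-- the sequential (moving horizon) optimisation can fail: the
first two-stage model's optimal value for x⁰ is 1, every optimal first-stage
solution admits no feasible completion in the second two-stage model, yet the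
three-stage model is feasible. -/
theorem movingHorizon_can_fail :
    IsGreatest {x0 : ℝ | ∃ x1 : ℝ, x0 ≤ 1 ∧ x0 - x1 ≤ 1 ∧ 0 ≤ x0 ∧ 0 ≤ x1} 1 ∧
    (∀ x0 x1 : ℝ, (x0 ≤ 1 ∧ x0 - x1 ≤ 1 ∧ 0 ≤ x0 ∧ 0 ≤ x1) → x0 = 1 →
      ¬ ∃ y1 y2 : ℝ, 0 ≤ y1 ∧ 0 ≤ y2 ∧ y1 ≤ 1 - x0 ∧ y1 + y2 ≤ 1 / 2 - x0) ∧
    (∃ x0 x1 x2 : ℝ, x0 ≤ 1 ∧ x0 - x1 ≤ 1 ∧ x0 + x1 + x2 ≤ 1 / 2 ∧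
      0 ≤ x0 ∧ 0 ≤ x1 ∧ 0 ≤ x2) := by
  refine ⟨⟨⟨0, by norm_num⟩, ?_⟩, ?_, 0, 0, 0, by norm_num⟩
  · rintro x ⟨x1, h1, -, -, -⟩; exact h1
  · rintro x0 x1 _ rfl ⟨y1, y2, hy1, hy2, h3, h4⟩; linarith
end
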